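/- Let C be a linear [n,k]_q code with generator matrix G and parity-check matrix H, and let Hull(C) = C ∩ C^⊥. Then rank(G·G^t) = k − dim(Hull(C)) and rank(H·H^t) = n − k − dim(Hull(C)). -/

import Mathlib

open Matrix

variable {F : Type*} [Field F] [Fintype F]

/-- The Euclidean dual of a linear code `C ⊆ F^n`. -/
def dualCode {n : ℕ} (C : Submodule F (Fin n → F)) : Submodule F (Fin n → F) where
  carrier := {u | ∀ c ∈ C, dotProduct u c = 0}
  add_mem' := by
    intro a b ha hb c hc
    simp [add_dotProduct, ha c hc, hb c hc]
  zero_mem' := by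
    intro c hc
    simp
  smul_mem' := by
    intro r a ha c hc
    simp [smul_dotProduct, ha c hc]

/-- `G` is a generator matrix of the code `C`: its rows form a basis of `C`. -/
def IsGenMat {n k : ℕ} (C : Submodule F (Fin n → F)) (G : Matrix (Fin k) (Fin n) F) : Prop :=
  LinearIndependent F (fun i => G i) ∧ Submodule.span F (Set.range fun i => G i) = C

/-! The dot product is a nondegenerate symmetric bilinear form on `F^n`, so `dim C^⊥ = n - dim C`
and `C^⊥⊥ = C`. For a generator matrix `G` of `C`, the map `Gᵀ : F^k → F^n` is injective with
image `C`, and `ker (G Gᵀ) = (Gᵀ)⁻¹ (C^⊥)`, which `Gᵀ` carries isomorphically onto `C ∩ C^⊥`;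
rank–nullity gives `rank (G Gᵀ) = k - dim Hull(C)`. The same argument for the generator matrix `H`
of `C^⊥`, whose hull `C^⊥ ∩ C^⊥⊥` is again `Hull(C)`, gives the second formula. -/

open Module LinearMap.BilinForm

section DualCode

variable {K : Type*} [Field K] {n : ℕ}

abbrev dotProductForm (K : Type*) [Field K] (n : ℕ) : LinearMap.BilinForm K (Fin n → K) :=
  dotProductBilin K K

lemma dotProductForm_isSymm : (dotProductForm K n).IsSymm :=
  ⟨dotProduct_comm⟩

lemma dotProductForm_nondegenerate : (dotProductForm K n).Nondegenerate :=
  (LinearMap.IsRefl.nondegenerate_iff_separatingLeft (B := dotProductForm K n)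
    dotProductForm_isSymm.isRefl).mpr dotProduct_eq_zero

lemma dualCode_eq_orthogonal (C : Submodule K (Fin n → K)) :
    dualCode C = (dotProductForm K n).orthogonal C := by
  ext u
  simp only [mem_orthogonal_iff, dotProductBilin_apply_apply, dotProduct_comm _ u]
  rfl

lemma finrank_dualCode (C : Submodule K (Fin n → K)) :
    finrank K (dualCode C) = n - finrank K C := by
  rw [dualCode_eq_orthogonal, finrank_orthogonal dotProductForm_nondegenerate,
    finrank_fin_fun]

lemma dualCode_dualCode (C : Submodule K (Fin n → K)) : dualCode (dualCode C) = C := by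
  rw [dualCode_eq_orthogonal, dualCode_eq_orthogonal,
    orthogonal_orthogonal dotProductForm_nondegenerate dotProductForm_isSymm.isRefl]

lemma dualCode_span_rows {m : ℕ} (M : Matrix (Fin m) (Fin n) K) :
    dualCode (Submodule.span K (Set.range M.row)) = LinearMap.ker M.mulVecLin := by
  ext u
  change Submodule.span K _ ≤ LinearMap.ker (dotProductForm K n u) ↔ _
  rw [Submodule.span_le, Set.range_subset_iff, LinearMap.mem_ker, mulVecLin_apply, funext_iff]
  exact forall_congr' fun i => by simp [mulVec, dotProduct_comm u, row]

end DualCode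

section GeneratorMatrix

variable {K : Type*} [Field K] {n k : ℕ} {C : Submodule K (Fin n → K)}
  {G : Matrix (Fin k) (Fin n) K}

lemma ker_mulVecLin_mul_transpose {m : ℕ} (M : Matrix (Fin m) (Fin n) K) :
    LinearMap.ker (M * Mᵀ).mulVecLin =
      (dualCode (Submodule.span K (Set.range M.row))).comap Mᵀ.mulVecLin := by
  rw [mulVecLin_mul, LinearMap.ker_comp, dualCode_span_rows]

lemma IsGenMat.finrank_eq (hG : IsGenMat C G) : finrank K C = k := by
  rw [← hG.2, finrank_span_eq_card hG.1, Fintype.card_fin]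

lemma IsGenMat.rank_mul_transpose_add_finrank_hull (hG : IsGenMat C G) :
    (G * Gᵀ).rank + finrank K ↥(C ⊓ dualCode C) = k := by
  obtain ⟨hind, hspan⟩ : LinearIndependent K G.row ∧ Submodule.span K (Set.range G.row) = C := hG
  have hinj : Function.Injective Gᵀ.mulVecLin := by
    rw [mulVecLin_transpose, coe_vecMulLinear]
    exact vecMul_injective_iff.mpr hind
  have hrange : LinearMap.range Gᵀ.mulVecLin = C := by
    rw [mulVecLin_transpose, range_vecMulLinear, ← hspan]
  have hker : finrank K (LinearMap.ker (G * Gᵀ).mulVecLin) = finrank K ↥(C ⊓ dualCode C) := by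
    rw [ker_mulVecLin_mul_transpose, (Submodule.equivMapOfInjective _ hinj _).finrank_eq,
      Submodule.map_comap_eq, hspan, hrange, inf_comm]
  rw [Matrix.rank, ← hker, LinearMap.finrank_range_add_finrank_ker, finrank_fin_fun]

end GeneratorMatrix

theorem rank_GGt_HHt_hull_general {n k mH : ℕ}
    (C : Submodule F (Fin n → F))
    (G : Matrix (Fin k) (Fin n) F) (hG : IsGenMat C G)
    (H : Matrix (Fin mH) (Fin n) F) (hH : IsGenMat (dualCode C) H) :
    (G * G.transpose).rank = k - Module.finrank F ↥(C ⊓ dualCode C) ∧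
      (H * H.transpose).rank = n - k - Module.finrank F ↥(C ⊓ dualCode C) := by
  have hmH : mH = n - k := by rw [← hH.finrank_eq, finrank_dualCode, hG.finrank_eq]
  have hrankG := hG.rank_mul_transpose_add_finrank_hull
  have hrankH := hH.rank_mul_transpose_add_finrank_hull
  rw [dualCode_dualCode, inf_comm] at hrankH
  constructor <;> omega

theorem rank_GGt_HHt_hull {n k mH : ℕ}
    (C : Submodule F (Fin n → F)) (hk : Module.finrank F C = k)
    (G : Matrix (Fin k) (Fin n) F) (hG : IsGenMat C G)
    (H : Matrix (Fin mH) (Fin n) F) (hH : IsGenMat (dualCode C) H) :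
    (G * G.transpose).rank = k - Module.finrank F ↥(C ⊓ dualCode C) ∧
      (H * H.transpose).rank = n - k - Module.finrank F ↥(C ⊓ dualCode C) :=
  rank_GGt_HHt_hull_general C G hG H hH
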